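/- Let γ ∈ [1/2, 1), T a finite set, R₁ : T → ℝ with non-constant discounted return G₁ satisfying G₁(ξ) > 0 for all ξ. Then there is no function R₂ : T → ℝ whose discounted return G₂ satisfies G₂(ξ) = ln(G₁(ξ)) for all ξ ∈ T^ℕ. -/

import Mathlib

/-!
The discounted return satisfies `G (t :: ξ) = R t + γ G ξ`. If `G₂ = log ∘ G₁`, then for every
state `t` and every path `ξ`, `R₂ t + γ log (G₁ ξ) = log (R₁ t + γ G₁ ξ)`. Taking two states with
`R₁ t₁ ≠ R₁ t₂` and two paths with returns `a ≠ b`, the quantity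
`log (R₁ t + γ a) - log (R₁ t + γ b) = γ (log a - log b)` would not depend on `t`; but
`r ↦ log (r + γ a) - log (r + γ b)` is injective, since the logarithm is not affine.
-/

open Real

noncomputable def discountedReturn {T : Type*} (γ : ℝ) (R : T → ℝ) (ξ : ℕ → T) : ℝ :=
  ∑' j : ℕ, γ ^ j * R (ξ j)

section DiscountedReturn

variable {T : Type*} {γ : ℝ}

lemma summable_discountedReturn [Finite T] (hγ : |γ| < 1) (R : T → ℝ) (ξ : ℕ → T) :
    Summable fun j : ℕ => γ ^ j * R (ξ j) := by
  obtain ⟨C, hC⟩ := (Set.finite_range fun t => ‖R t‖).bddAbove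
  refine Summable.of_norm_bounded
    ((summable_geometric_of_lt_one (abs_nonneg γ) hγ).mul_right C) fun j => ?_
  rw [norm_mul, norm_pow, Real.norm_eq_abs]
  exact mul_le_mul_of_nonneg_left (hC ⟨ξ j, rfl⟩) (pow_nonneg (abs_nonneg γ) j)

lemma discountedReturn_cons [Finite T] (hγ : |γ| < 1) (R : T → ℝ) (t : T) (ξ : ℕ → T) :
    discountedReturn γ R (fun | 0 => t | n + 1 => ξ n) = R t + γ * discountedReturn γ R ξ := by
  unfold discountedReturn
  rw [(summable_discountedReturn hγ R _).tsum_eq_zero_add, ← tsum_mul_left]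
  simp only [pow_zero, one_mul, pow_succ']
  congr 1
  exact tsum_congr fun j => mul_assoc _ _ _

lemma exists_ne_of_discountedReturn_ne {R : T → ℝ} {ξ ξ' : ℕ → T}
    (h : discountedReturn γ R ξ ≠ discountedReturn γ R ξ') : ∃ t₁ t₂, R t₁ ≠ R t₂ := by
  by_contra! hR
  exact h (tsum_congr fun j => by rw [hR (ξ j) (ξ' j)])

lemma bellman_of_discountedReturn_eq_comp [Finite T] (hγ : |γ| < 1) {R₁ R₂ : T → ℝ}
    {f : ℝ → ℝ} (h : ∀ ξ, discountedReturn γ R₂ ξ = f (discountedReturn γ R₁ ξ))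
    (t : T) (ξ : ℕ → T) :
    R₂ t + γ * f (discountedReturn γ R₁ ξ) = f (R₁ t + γ * discountedReturn γ R₁ ξ) := by
  rw [← h, ← discountedReturn_cons hγ, ← discountedReturn_cons hγ, h]

end DiscountedReturn

lemma eq_of_log_add_sub_log_add_eq {r₁ r₂ c d : ℝ} (hcd : c ≠ d)
    (h₁c : 0 < r₁ + c) (h₁d : 0 < r₁ + d) (h₂c : 0 < r₂ + c) (h₂d : 0 < r₂ + d)
    (h : log (r₁ + c) - log (r₁ + d) = log (r₂ + c) - log (r₂ + d)) : r₁ = r₂ := by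
  have hlog : log ((r₁ + c) * (r₂ + d)) = log ((r₁ + d) * (r₂ + c)) := by
    rw [log_mul h₁c.ne' h₂d.ne', log_mul h₁d.ne' h₂c.ne']
    linarith
  have hprod := log_injOn_pos (mul_pos h₁c h₂d) (mul_pos h₁d h₂c) hlog
  have : (r₁ - r₂) * (d - c) = 0 := by linear_combination hprod
  exact sub_eq_zero.1 ((mul_eq_zero.1 this).resolve_right (sub_ne_zero.2 hcd.symm))

/-- No Markovian reward realizes the logarithm of a non-constant positive return. -/
theorem stmt_5 (γ : ℝ) (hγ : 1/2 ≤ γ) (hγ1 : γ < 1)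
    (T : Type*) [Fintype T]
    (R₁ : T → ℝ)
    (hpos : ∀ ξ : ℕ → T, 0 < ∑' j : ℕ, γ^j * R₁ (ξ j))
    (hnc : ¬ ∀ ξ ξ' : ℕ → T,
      (∑' j : ℕ, γ^j * R₁ (ξ j)) = ∑' j : ℕ, γ^j * R₁ (ξ' j)) :
    ¬ ∃ R₂ : T → ℝ, ∀ ξ : ℕ → T,
      (∑' j : ℕ, γ^j * R₂ (ξ j)) = Real.log (∑' j : ℕ, γ^j * R₁ (ξ j)) := by
  rintro ⟨R₂, hR₂⟩
  simp only [not_forall] at hnc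
  obtain ⟨ξ, ξ', hne⟩ := hnc
  change discountedReturn γ R₁ ξ ≠ discountedReturn γ R₁ ξ' at hne
  obtain ⟨t₁, t₂, ht⟩ := exists_ne_of_discountedReturn_ne hne
  have hγabs : |γ| < 1 := abs_lt.2 ⟨by linarith, hγ1⟩
  have hγ0 : γ ≠ 0 := by positivity
  have hbell := bellman_of_discountedReturn_eq_comp hγabs (f := log) hR₂
  have hpos' (t : T) (ζ : ℕ → T) : 0 < R₁ t + γ * discountedReturn γ R₁ ζ :=
    discountedReturn_cons hγabs R₁ t ζ ▸ hpos _
  refine ht (eq_of_log_add_sub_log_add_eq ((mul_right_injective₀ hγ0).ne hne)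
    (hpos' t₁ ξ) (hpos' t₁ ξ') (hpos' t₂ ξ) (hpos' t₂ ξ') ?_)
  linarith [hbell t₁ ξ, hbell t₁ ξ', hbell t₂ ξ, hbell t₂ ξ']
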